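/- Let d be a positive integer, let Γ be a d×d real symmetric positive definite matrix, and let S be a d×d real symmetric matrix. Then for every natural number k: tr((I_d − S Γ^{−1})^k (I_d − Γ^{−1} S)^k) ≤ tr(Γ) · tr(Γ^{−1}) · tr((I_d − Γ^{−1/2} S Γ^{−1/2})^{2k}), where Γ^{1/2} is the symmetric positive definite square root of Γ and Γ^{−1/2} its inverse. -/

import Mathlib

open Matrix

open scoped ComplexOrder in
noncomputable def Matrix.PosSemidef.sqrt {n 𝕜 : Type*} [Fintype n] [DecidableEq n] [RCLike 𝕜]
    {A : Matrix n n 𝕜} (hA : A.PosSemidef) : Matrix n n 𝕜 :=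
  hA.1.eigenvectorUnitary.1 * diagonal (((↑) : ℝ → 𝕜) ∘ (hA.1.eigenvalues · |>.sqrt))
  * (star hA.1.eigenvectorUnitary : Matrix n n 𝕜)

private lemma psqrt_herm {d : ℕ} {X : Matrix (Fin d) (Fin d) ℝ} (hX : X.PosSemidef) :
    (Matrix.PosSemidef.sqrt hX).IsHermitian := by
  unfold Matrix.PosSemidef.sqrt
  have := isHermitian_mul_mul_conjTranspose (hX.1.eigenvectorUnitary.1)
    (isHermitian_diagonal_of_self_adjoint ((RCLike.ofReal : ℝ → ℝ) ∘ (hX.1.eigenvalues · |>.sqrt))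
      (IsSelfAdjoint.all _))
  exact this

private lemma psqrt_mul_self {d : ℕ} {X : Matrix (Fin d) (Fin d) ℝ} (hX : X.PosSemidef) :
    Matrix.PosSemidef.sqrt hX * Matrix.PosSemidef.sqrt hX = X := by
  unfold Matrix.PosSemidef.sqrt
  set U := hX.1.eigenvectorUnitary
  have hU : (star U : Matrix (Fin d) (Fin d) ℝ) * U.1 = 1 := Unitary.star_mul_self_of_mem U.2
  conv_rhs => rw [hX.1.spectral_theorem]
  rw [Unitary.conjStarAlgAut_apply]
  calc _ = U.1 * diagonal ((RCLike.ofReal : ℝ → ℝ) ∘ (hX.1.eigenvalues · |>.sqrt)) *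
        ((star U : Matrix (Fin d) (Fin d) ℝ) * U.1) *
        diagonal ((RCLike.ofReal : ℝ → ℝ) ∘ (hX.1.eigenvalues · |>.sqrt)) * (star U : Matrix (Fin d) (Fin d) ℝ) := by
        simp only [Matrix.mul_assoc]
    _ = _ := by
        rw [hU, Matrix.mul_one, Matrix.mul_assoc U.1, diagonal_mul_diagonal]
        congr 3
        funext i
        simp [Real.mul_self_sqrt (hX.eigenvalues_nonneg i)]

attribute [local instance] Matrix.frobeniusSeminormedAddCommGroup Matrix.frobeniusNormedRing

private lemma trace_mul_transpose_self_eq {d : ℕ} (P : Matrix (Fin d) (Fin d) ℝ) :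
    (P * Pᵀ).trace = ‖P‖ ^ 2 := by
  rw [Matrix.frobenius_norm_def, ← Real.rpow_natCast _ 2, ← Real.rpow_mul (by positivity)]
  norm_num
  simp [Matrix.trace, Matrix.mul_apply, Matrix.diag, sq, Real.norm_eq_abs, abs_mul_abs_self]

private lemma herm_transpose {d : ℕ} {X : Matrix (Fin d) (Fin d) ℝ} (h : X.IsHermitian) :
    Xᵀ = X := by
  rw [← Matrix.conjTranspose_eq_transpose_of_trivial, h.eq]

private lemma psd_trace_eq {d : ℕ} {X : Matrix (Fin d) (Fin d) ℝ} (hX : X.PosSemidef) :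
    X.trace = ‖Matrix.PosSemidef.sqrt hX‖ ^ 2 := by
  conv_lhs => rw [← psqrt_mul_self hX]
  rw [← trace_mul_transpose_self_eq, herm_transpose (psqrt_herm hX)]

private lemma psd_trace_nonneg {d : ℕ} {X : Matrix (Fin d) (Fin d) ℝ} (hX : X.PosSemidef) :
    0 ≤ X.trace := by
  rw [psd_trace_eq hX]; positivity

/-- `tr(XY) ≤ tr X * tr Y` for positive semidefinite `X, Y`. -/
private lemma trace_mul_le_psd {d : ℕ} {X Y : Matrix (Fin d) (Fin d) ℝ}
    (hX : X.PosSemidef) (hY : Y.PosSemidef) : (X * Y).trace ≤ X.trace * Y.trace := by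
  set A := Matrix.PosSemidef.sqrt hX with hA
  set B := Matrix.PosSemidef.sqrt hY with hB
  have hAt : Aᵀ = A := herm_transpose (psqrt_herm hX)
  have hBt : Bᵀ = B := herm_transpose (psqrt_herm hY)
  have h1 : (X * Y).trace = ‖A * B‖ ^ 2 := by
    conv_lhs => rw [← psqrt_mul_self hX, ← psqrt_mul_self hY, ← hA, ← hB,
      mul_assoc, Matrix.trace_mul_comm, ← mul_assoc, mul_assoc]
    rw [← trace_mul_transpose_self_eq (A * B), Matrix.transpose_mul, hAt, hBt]
  rw [h1, psd_trace_eq hX, psd_trace_eq hY, ← hA, ← hB, ← mul_pow]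
  exact pow_le_pow_left₀ (norm_nonneg _) (Matrix.frobenius_norm_mul A B) 2

private lemma conj_pow' {d : ℕ} (M A N : Matrix (Fin d) (Fin d) ℝ)
    (h1 : N * M = 1) (h2 : M * N = 1) (k : ℕ) : (M * A * N) ^ k = M * A ^ k * N := by
  induction k with
  | zero => simp [h2]
  | succ k ih =>
      rw [pow_succ, ih, pow_succ]
      calc M * A ^ k * N * (M * A * N) = M * A ^ k * (N * M) * A * N := by
            simp only [Matrix.mul_assoc]
        _ = M * (A ^ k * A) * N := by rw [h1]; simp only [Matrix.mul_assoc, Matrix.one_mul]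

/-- For `Γ` symmetric positive definite with symmetric positive definite
square root `Γ^{1/2}` (and `Γ^{−1/2} = (Γ^{1/2})⁻¹`) and `S` symmetric, for every `k`:
`tr((I − S Γ⁻¹)^k (I − Γ⁻¹ S)^k) ≤ tr(Γ) · tr(Γ⁻¹) · tr((I − Γ^{−1/2} S Γ^{−1/2})^{2k})`. -/
theorem stmt15 (d : ℕ) (hd : 0 < d)
    (Γ : Matrix (Fin d) (Fin d) ℝ) (hΓ : Γ.PosDef)
    (S : Matrix (Fin d) (Fin d) ℝ) (hS : S.IsHermitian) :
    ∀ k : ℕ,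
      ((((1 : Matrix (Fin d) (Fin d) ℝ) - S * Γ⁻¹) ^ k *
          ((1 : Matrix (Fin d) (Fin d) ℝ) - Γ⁻¹ * S) ^ k).trace) ≤
        Γ.trace * Γ⁻¹.trace *
          (((1 : Matrix (Fin d) (Fin d) ℝ) -
              (Matrix.PosSemidef.sqrt hΓ.posSemidef)⁻¹ * S * (Matrix.PosSemidef.sqrt hΓ.posSemidef)⁻¹) ^ (2 * k)).trace := by
  intro k
  set R : Matrix (Fin d) (Fin d) ℝ := Matrix.PosSemidef.sqrt hΓ.posSemidef with hRdef
  have hR2 : R * R = Γ := psqrt_mul_self hΓ.posSemidef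
  have hRherm : R.IsHermitian := psqrt_herm hΓ.posSemidef
  have hdet : IsUnit R.det := by
    have h : R.det * R.det = Γ.det := by rw [← Matrix.det_mul, hR2]
    have hΓd : Γ.det ≠ 0 := ne_of_gt hΓ.det_pos
    exact isUnit_iff_ne_zero.mpr (fun h0 => hΓd (by rw [← h, h0, zero_mul]))
  have hNM : R⁻¹ * R = 1 := Matrix.nonsing_inv_mul R hdet
  have hMN : R * R⁻¹ = 1 := Matrix.mul_nonsing_inv R hdet
  have hΓinv : Γ⁻¹ = R⁻¹ * R⁻¹ := by rw [← hR2, Matrix.mul_inv_rev]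
  set A : Matrix (Fin d) (Fin d) ℝ := 1 - R⁻¹ * S * R⁻¹ with hAdef
  have hRinvherm : (R⁻¹).IsHermitian := hRherm.inv
  have hAherm : A.IsHermitian := by
    refine Matrix.IsHermitian.sub Matrix.isHermitian_one ?_
    have := Matrix.isHermitian_conjTranspose_mul_mul (R⁻¹) hS
    rwa [hRinvherm.eq] at this
  have hAkherm : (A ^ k).IsHermitian := hAherm.pow k
  -- conjugation identities
  have e1 : (1 : Matrix (Fin d) (Fin d) ℝ) - Γ⁻¹ * S = R⁻¹ * A * R := by
    rw [hAdef, mul_sub, sub_mul, mul_one, hNM, hΓinv]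
    congr 1
    simp only [Matrix.mul_assoc, hNM, Matrix.mul_one]
  have e2 : (1 : Matrix (Fin d) (Fin d) ℝ) - S * Γ⁻¹ = R * A * R⁻¹ := by
    rw [hAdef, mul_sub, sub_mul, mul_one, hMN, hΓinv]
    congr 1
    symm
    calc R * (R⁻¹ * S * R⁻¹) * R⁻¹ = (R * R⁻¹) * S * (R⁻¹ * R⁻¹) := by
          simp only [Matrix.mul_assoc]
      _ = S * (R⁻¹ * R⁻¹) := by rw [hMN, Matrix.one_mul]
  have p1 : ((1 : Matrix (Fin d) (Fin d) ℝ) - Γ⁻¹ * S) ^ k = R⁻¹ * A ^ k * R := by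
    rw [e1, conj_pow' _ _ _ hMN hNM]
  have p2 : ((1 : Matrix (Fin d) (Fin d) ℝ) - S * Γ⁻¹) ^ k = R * A ^ k * R⁻¹ := by
    rw [e2, conj_pow' _ _ _ hNM hMN]
  -- the trace of the LHS
  have key : (((1 : Matrix (Fin d) (Fin d) ℝ) - S * Γ⁻¹) ^ k *
      ((1 : Matrix (Fin d) (Fin d) ℝ) - Γ⁻¹ * S) ^ k).trace
      = ((A ^ k * Γ⁻¹ * A ^ k) * Γ).trace := by
    rw [p1, p2]
    rw [show R * A ^ k * R⁻¹ * (R⁻¹ * A ^ k * R) = R * (A ^ k * (R⁻¹ * R⁻¹) * A ^ k * R) by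
      simp only [Matrix.mul_assoc]]
    rw [Matrix.trace_mul_comm]
    rw [show A ^ k * (R⁻¹ * R⁻¹) * A ^ k * R * R = A ^ k * (R⁻¹ * R⁻¹) * A ^ k * (R * R) by
      simp only [Matrix.mul_assoc]]
    rw [hR2, ← hΓinv]
  rw [key]
  -- positive semidefiniteness facts
  have hBig : (A ^ k * Γ⁻¹ * A ^ k).PosSemidef := by
    have := hΓ.inv.posSemidef.mul_mul_conjTranspose_same (A ^ k)
    rwa [hAkherm.eq] at this
  have hA2k : (A ^ (2 * k)).PosSemidef := by
    have : A ^ (2 * k) = (A ^ k)ᴴ * (A ^ k) := by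
      rw [hAkherm.eq, ← pow_add, two_mul]
    rw [this]
    exact Matrix.posSemidef_conjTranspose_mul_self _
  have hBigTr : (A ^ k * Γ⁻¹ * A ^ k).trace = (Γ⁻¹ * A ^ (2 * k)).trace := by
    rw [Matrix.trace_mul_comm, show A ^ k * (A ^ k * Γ⁻¹) = A ^ (2 * k) * Γ⁻¹ by
      rw [← Matrix.mul_assoc, ← pow_add, two_mul], Matrix.trace_mul_comm]
  calc ((A ^ k * Γ⁻¹ * A ^ k) * Γ).trace
      ≤ (A ^ k * Γ⁻¹ * A ^ k).trace * Γ.trace :=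
        trace_mul_le_psd hBig hΓ.posSemidef
    _ = (Γ⁻¹ * A ^ (2 * k)).trace * Γ.trace := by rw [hBigTr]
    _ ≤ (Γ⁻¹.trace * (A ^ (2 * k)).trace) * Γ.trace := by
        exact mul_le_mul_of_nonneg_right (trace_mul_le_psd hΓ.inv.posSemidef hA2k)
          (psd_trace_nonneg hΓ.posSemidef)
    _ = Γ.trace * Γ⁻¹.trace * (A ^ (2 * k)).trace := by ring
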